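/- Energy conservation with a weakly imposed homogeneous pressure boundary condition via the SAT penalty method (Appendix A, matrix form). Let n̂, n₁, n₂, m be positive integers. Let Ĥ, Ĵ be positive diagonal n̂×n̂ real matrices, H₁, J₁ positive diagonal n₁×n₁, H₂, J₂ positive diagonal n₂×n₂, and M̂_b, Ĵ_b positive diagonal m×m real matrices. Let D₁ ∈ ℝ^{n₁×n̂}, D₂ ∈ ℝ^{n₂×n̂}, D̂₁ ∈ ℝ^{n̂×n₁}, D̂₂ ∈ ℝ^{n̂×n₂} satisfy Ĥ·D̂₂ = −D₂ᵀ·H₂ (periodic in the second direction) and the SBP-with-boundary relation Ĥ·D̂₁ + D₁ᵀ·H₁ = −L·M̂_b·Λ, where L ∈ ℝ^{n₁×m} and Λ ∈ ℝ^{m×n̂} are boundary restriction matrices satisfying the compatibility condition Lᵀ·J₁ = Ĵ_b·Lᵀ. Set H = blockdiag(H₁, H₂), J = blockdiag(J₁, J₂), and let G be an invertible (n₁+n₂)×(n₁+n₂) real matrix such that H·J·G⁻¹ is symmetric. Suppose p : ℝ → ℝ^{n̂}, v¹ : ℝ → ℝ^{n₁}, v² : ℝ → ℝ^{n₂} are differentiable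 and satisfy, for all t, Ĵ·p′(t) = −(D̂₁·J₁·v¹(t) + D̂₂·J₂·v²(t)) and (v¹, v²)′(t) = −G·(D₁·p(t) − S(t), D₂·p(t)) with the SAT penalty S(t) = −H₁⁻¹·J₁⁻¹·L·M̂_b·Ĵ_b·Λ·p(t). Then the discrete energy E(t) = ½·p(t)ᵀ·Ĥ·Ĵ·p(t) + ½·(v¹(t), v²(t))ᵀ·H·J·G⁻¹·(v¹(t), v²(t)) has derivative zero for every t; in particular E is constant. -/

import Mathlib

/-!
Differentiating the energy gives `E' = pᵀ Ĥ Ĵ p' + wᵀ H J G⁻¹ w'` with `w = (v¹, v²)`, both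
quadratic forms being symmetric. By the two SBP relations, the pressure part equals
`v¹ᵀ H₁ J₁ (D₁ p - S) + v²ᵀ H₂ J₂ D₂ p`: the boundary term `(L M̂_b Λ)ᵀ J₁`, turned into
`(L M̂_b Ĵ_b Λ)ᵀ` by the compatibility condition, is precisely `v¹ᵀ H₁ J₁ S`, which is how the
SAT penalty is designed. The velocity part is the negative of the same expression, since
`H J G⁻¹ G = H J` is block diagonal.
-/

open Matrix

variable {ι κ κ₁ κ₂ μ R 𝕜 : Type*} [Fintype ι] [Fintype κ₁] [Fintype κ₂] [CommRing R]

theorem Matrix.IsSymm.dotProduct_mulVec_comm {A : Matrix ι ι R} (hA : A.IsSymm) (x y : ι → R) :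
    x ⬝ᵥ A *ᵥ y = y ⬝ᵥ A *ᵥ x := by
  simpa only [hA.eq] using dotProduct_transpose_mulVec A x y

theorem Matrix.isSymm_diagonal_mul_diagonal [DecidableEq ι] (a b : ι → R) :
    (diagonal a * diagonal b).IsSymm := by
  rw [diagonal_mul_diagonal]
  exact isSymm_diagonal _

theorem Matrix.mul_mulVec_inv_mulVec_inv [DecidableEq ι] {A B : Matrix ι ι R}
    (hAB : Commute A B) (hA : IsUnit A) (hB : IsUnit B) (x : ι → R) :
    (A * B) *ᵥ (A⁻¹ *ᵥ (B⁻¹ *ᵥ x)) = x := by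
  rw [mulVec_mulVec, mulVec_mulVec, hAB.eq,
    mul_nonsing_inv_cancel_right _ _ ((isUnit_iff_isUnit_det A).mp hA),
    mul_nonsing_inv _ ((isUnit_iff_isUnit_det B).mp hB), one_mulVec]

section Derivatives

variable [NontriviallyNormedField 𝕜] {f g : 𝕜 → ι → 𝕜} {f' g' : ι → 𝕜} {t : 𝕜}

theorem HasDerivAt.dotProduct (hf : HasDerivAt f f' t) (hg : HasDerivAt g g' t) :
    HasDerivAt (fun s => f s ⬝ᵥ g s) (f' ⬝ᵥ g t + f t ⬝ᵥ g') t := by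
  have hsum := HasDerivAt.fun_sum (u := Finset.univ) fun i _ =>
    (hasDerivAt_pi.mp hf i).fun_mul (hasDerivAt_pi.mp hg i)
  rw [_root_.dotProduct, _root_.dotProduct, ← Finset.sum_add_distrib]
  exact hsum

theorem HasDerivAt.mulVec (A : Matrix κ ι 𝕜) (hf : HasDerivAt f f' t) :
    HasDerivAt (fun s => A *ᵥ f s) (A *ᵥ f') t :=
  hasDerivAt_pi.mpr fun i =>
    HasDerivAt.fun_sum fun j _ => (hasDerivAt_pi.mp hf j).const_mul (A i j)

theorem HasDerivAt.dotProduct_mulVec_self {A : Matrix ι ι 𝕜} (hA : A.IsSymm)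
    (hf : HasDerivAt f f' t) :
    HasDerivAt (fun s => f s ⬝ᵥ A *ᵥ f s) (2 * (f t ⬝ᵥ A *ᵥ f')) t := by
  convert hf.dotProduct (hf.mulVec A) using 1
  rw [hA.dotProduct_mulVec_comm f']
  ring

end Derivatives

theorem dotProduct_transpose_mul_mulVec [Fintype κ] {D : Matrix κ ι R} {H J : Matrix κ κ R}
    (hHJ : (H * J).IsSymm) (p : ι → R) (v : κ → R) :
    p ⬝ᵥ (Dᵀ * H) *ᵥ (J *ᵥ v) = v ⬝ᵥ (H * J) *ᵥ (D *ᵥ p) := by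
  rw [mulVec_mulVec, Matrix.mul_assoc, ← mulVec_mulVec, dotProduct_transpose_mulVec,
    dotProduct_comm, hHJ.dotProduct_mulVec_comm]

theorem dotProduct_boundary_transpose_mulVec [Fintype κ] [Fintype μ] {J : Matrix κ κ R}
    {L : Matrix κ μ R} {Mb Jb : Matrix μ μ R} {Lam : Matrix μ ι R} (hcompat : Lᵀ * J = Jb * Lᵀ)
    (hMb : Mb.IsSymm) (hJb : Jb.IsSymm) (hMbJb : Commute Mb Jb) (p : ι → R) (v : κ → R) :
    p ⬝ᵥ (L * Mb * Lam)ᵀ *ᵥ (J *ᵥ v) = v ⬝ᵥ L *ᵥ (Mb *ᵥ (Jb *ᵥ (Lam *ᵥ p))) := by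
  have hmat : (L * Mb * Lam)ᵀ * J = (L * Mb * Jb * Lam)ᵀ := by
    simp only [transpose_mul, hMb.eq, hJb.eq, Matrix.mul_assoc, hcompat]
    rw [← Matrix.mul_assoc Mb, hMbJb.eq, Matrix.mul_assoc]
  rw [mulVec_mulVec, hmat, dotProduct_transpose_mulVec]
  simp only [mulVec_mulVec, Matrix.mul_assoc]

theorem pressure_energy_rate [Fintype μ] {Hh Jh : Matrix ι ι R} {H1 J1 : Matrix κ₁ κ₁ R}
    {H2 J2 : Matrix κ₂ κ₂ R} {Mb Jb : Matrix μ μ R} {D1 : Matrix κ₁ ι R} {D2 : Matrix κ₂ ι R}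
    {Dh1 : Matrix ι κ₁ R} {Dh2 : Matrix ι κ₂ R} {L : Matrix κ₁ μ R} {Lam : Matrix μ ι R}
    (hSBP2 : Hh * Dh2 = -(D2ᵀ * H2)) (hSBP1 : Hh * Dh1 + D1ᵀ * H1 = -(L * Mb * Lam)ᵀ)
    (hcompat : Lᵀ * J1 = Jb * Lᵀ) (hHJ1 : (H1 * J1).IsSymm) (hHJ2 : (H2 * J2).IsSymm)
    (hMb : Mb.IsSymm) (hJb : Jb.IsSymm) (hMbJb : Commute Mb Jb) {p p' : ι → R} {v1 : κ₁ → R}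
    {v2 : κ₂ → R} {S : κ₁ → R} (hS : (H1 * J1) *ᵥ S = -(L *ᵥ (Mb *ᵥ (Jb *ᵥ (Lam *ᵥ p)))))
    (hode : Jh *ᵥ p' = -(Dh1 *ᵥ (J1 *ᵥ v1) + Dh2 *ᵥ (J2 *ᵥ v2))) :
    p ⬝ᵥ (Hh * Jh) *ᵥ p' = v1 ⬝ᵥ (H1 * J1) *ᵥ (D1 *ᵥ p - S) + v2 ⬝ᵥ (H2 * J2) *ᵥ (D2 *ᵥ p) := by
  rw [← mulVec_mulVec, hode, mulVec_neg, mulVec_add, mulVec_mulVec _ Hh Dh1,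
    mulVec_mulVec _ Hh Dh2, eq_sub_of_add_eq hSBP1, hSBP2, sub_mulVec, neg_mulVec, neg_mulVec]
  simp only [dotProduct_neg, dotProduct_add, dotProduct_sub, mulVec_sub, hS,
    dotProduct_boundary_transpose_mulVec hcompat hMb hJb hMbJb,
    dotProduct_transpose_mul_mulVec hHJ1, dotProduct_transpose_mul_mulVec hHJ2]
  ring

theorem velocity_energy_rate [DecidableEq κ₁] [DecidableEq κ₂] {H1 J1 : Matrix κ₁ κ₁ R}
    {H2 J2 : Matrix κ₂ κ₂ R} {G : Matrix (κ₁ ⊕ κ₂) (κ₁ ⊕ κ₂) R} (hG : IsUnit G)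
    (v1 a : κ₁ → R) (v2 b : κ₂ → R) :
    Sum.elim v1 v2 ⬝ᵥ (fromBlocks H1 0 0 H2 * fromBlocks J1 0 0 J2 * G⁻¹) *ᵥ
        -(G *ᵥ Sum.elim a b)
      = -(v1 ⬝ᵥ (H1 * J1) *ᵥ a + v2 ⬝ᵥ (H2 * J2) *ᵥ b) := by
  rw [mulVec_neg, mulVec_mulVec, Matrix.mul_assoc,
    nonsing_inv_mul _ ((isUnit_iff_isUnit_det G).mp hG), Matrix.mul_one, fromBlocks_multiply]
  simp [fromBlocks_mulVec]

theorem stmt16_general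
    (nh n1 n2 m : ℕ)
    (Hh Jh : Matrix (Fin nh) (Fin nh) ℝ) (dHh dJh : Fin nh → ℝ)
    (hHh : Hh = diagonal dHh)
    (hJh : Jh = diagonal dJh)
    (H1 J1 : Matrix (Fin n1) (Fin n1) ℝ) (dH1 dJ1 : Fin n1 → ℝ)
    (hH1 : H1 = diagonal dH1) (hdH1 : ∀ i, 0 < dH1 i)
    (hJ1 : J1 = diagonal dJ1) (hdJ1 : ∀ i, 0 < dJ1 i)
    (H2 J2 : Matrix (Fin n2) (Fin n2) ℝ) (dH2 dJ2 : Fin n2 → ℝ)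
    (hH2 : H2 = diagonal dH2)
    (hJ2 : J2 = diagonal dJ2)
    (Mb Jb : Matrix (Fin m) (Fin m) ℝ) (dMb dJb : Fin m → ℝ)
    (hMb : Mb = diagonal dMb)
    (hJb : Jb = diagonal dJb)
    (D1 : Matrix (Fin n1) (Fin nh) ℝ) (D2 : Matrix (Fin n2) (Fin nh) ℝ)
    (Dh1 : Matrix (Fin nh) (Fin n1) ℝ) (Dh2 : Matrix (Fin nh) (Fin n2) ℝ)
    (L : Matrix (Fin n1) (Fin m) ℝ) (Lam : Matrix (Fin m) (Fin nh) ℝ)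
    (hSBP2 : Hh * Dh2 = -(D2ᵀ * H2))
    (hSBP1 : Hh * Dh1 + D1ᵀ * H1 = -(L * Mb * Lam)ᵀ)
    (hcompat : Lᵀ * J1 = Jb * Lᵀ)
    (H J : Matrix (Fin n1 ⊕ Fin n2) (Fin n1 ⊕ Fin n2) ℝ)
    (hH : H = fromBlocks H1 0 0 H2) (hJ : J = fromBlocks J1 0 0 J2)
    (G : Matrix (Fin n1 ⊕ Fin n2) (Fin n1 ⊕ Fin n2) ℝ) (hG : IsUnit G)
    (hsym : (H * J * G⁻¹)ᵀ = H * J * G⁻¹)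
    (p : ℝ → Fin nh → ℝ) (v1 : ℝ → Fin n1 → ℝ) (v2 : ℝ → Fin n2 → ℝ)
    (p' : ℝ → Fin nh → ℝ) (w' : ℝ → (Fin n1 ⊕ Fin n2) → ℝ)
    (S : ℝ → Fin n1 → ℝ)
    (hS : ∀ t, S t = -(H1⁻¹ *ᵥ (J1⁻¹ *ᵥ (L *ᵥ (Mb *ᵥ (Jb *ᵥ (Lam *ᵥ p t)))))))
    (hp : ∀ t, HasDerivAt p (p' t) t)
    (hw : ∀ t, HasDerivAt (fun s => Sum.elim (v1 s) (v2 s)) (w' t) t)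
    (hode_p : ∀ t, Jh *ᵥ p' t = -(Dh1 *ᵥ (J1 *ᵥ v1 t) + Dh2 *ᵥ (J2 *ᵥ v2 t)))
    (hode_v : ∀ t, w' t = -(G *ᵥ Sum.elim (D1 *ᵥ p t - S t) (D2 *ᵥ p t)))
    (E : ℝ → ℝ)
    (hE : ∀ t, E t = (1/2) * (p t ⬝ᵥ (Hh * Jh) *ᵥ p t)
        + (1/2) * (Sum.elim (v1 t) (v2 t) ⬝ᵥ (H * J * G⁻¹) *ᵥ Sum.elim (v1 t) (v2 t))) :
    ∀ t, HasDerivAt E 0 t := by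
  intro t
  subst hHh hJh hH1 hJ1 hH2 hJ2 hMb hJb hH hJ
  have hSAT : (diagonal dH1 * diagonal dJ1) *ᵥ S t
      = -(L *ᵥ (diagonal dMb *ᵥ (diagonal dJb *ᵥ (Lam *ᵥ p t)))) := by
    rw [hS t, mulVec_neg, mul_mulVec_inv_mulVec_inv (commute_diagonal dH1 dJ1)
      (isUnit_diagonal.mpr (Pi.isUnit_iff.mpr fun i => (hdH1 i).ne'.isUnit))
      (isUnit_diagonal.mpr (Pi.isUnit_iff.mpr fun i => (hdJ1 i).ne'.isUnit))]
  have hpressure := pressure_energy_rate hSBP2 hSBP1 hcompat (isSymm_diagonal_mul_diagonal _ _)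
    (isSymm_diagonal_mul_diagonal _ _) (isSymm_diagonal _) (isSymm_diagonal _)
    (commute_diagonal _ _) hSAT (hode_p t)
  have hpressure_form := (hp t).dotProduct_mulVec_self (isSymm_diagonal_mul_diagonal dHh dJh)
  have hvelocity_form := (hw t).dotProduct_mulVec_self hsym
  have hderiv := (hpressure_form.const_mul (1 / 2)).fun_add (hvelocity_form.const_mul (1 / 2))
  rw [funext hE]
  refine hderiv.congr_deriv ?_
  rw [hpressure, hode_v t, velocity_energy_rate hG]
  ring

/-- Energy conservation with a weakly imposed homogeneous pressure boundary condition
via the SAT penalty method (Appendix A, matrix form). -/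
theorem stmt16
    (nh n1 n2 m : ℕ) (hnh : 0 < nh) (hn1 : 0 < n1) (hn2 : 0 < n2) (hm : 0 < m)
    (Hh Jh : Matrix (Fin nh) (Fin nh) ℝ) (dHh dJh : Fin nh → ℝ)
    (hHh : Hh = diagonal dHh) (hdHh : ∀ i, 0 < dHh i)
    (hJh : Jh = diagonal dJh) (hdJh : ∀ i, 0 < dJh i)
    (H1 J1 : Matrix (Fin n1) (Fin n1) ℝ) (dH1 dJ1 : Fin n1 → ℝ)
    (hH1 : H1 = diagonal dH1) (hdH1 : ∀ i, 0 < dH1 i)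
    (hJ1 : J1 = diagonal dJ1) (hdJ1 : ∀ i, 0 < dJ1 i)
    (H2 J2 : Matrix (Fin n2) (Fin n2) ℝ) (dH2 dJ2 : Fin n2 → ℝ)
    (hH2 : H2 = diagonal dH2) (hdH2 : ∀ i, 0 < dH2 i)
    (hJ2 : J2 = diagonal dJ2) (hdJ2 : ∀ i, 0 < dJ2 i)
    (Mb Jb : Matrix (Fin m) (Fin m) ℝ) (dMb dJb : Fin m → ℝ)
    (hMb : Mb = diagonal dMb) (hdMb : ∀ i, 0 < dMb i)
    (hJb : Jb = diagonal dJb) (hdJb : ∀ i, 0 < dJb i)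
    (D1 : Matrix (Fin n1) (Fin nh) ℝ) (D2 : Matrix (Fin n2) (Fin nh) ℝ)
    (Dh1 : Matrix (Fin nh) (Fin n1) ℝ) (Dh2 : Matrix (Fin nh) (Fin n2) ℝ)
    (L : Matrix (Fin n1) (Fin m) ℝ) (Lam : Matrix (Fin m) (Fin nh) ℝ)
    (hSBP2 : Hh * Dh2 = -(D2ᵀ * H2))
    (hSBP1 : Hh * Dh1 + D1ᵀ * H1 = -(L * Mb * Lam)ᵀ)
    (hcompat : Lᵀ * J1 = Jb * Lᵀ)
    (H J : Matrix (Fin n1 ⊕ Fin n2) (Fin n1 ⊕ Fin n2) ℝ)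
    (hH : H = fromBlocks H1 0 0 H2) (hJ : J = fromBlocks J1 0 0 J2)
    (G : Matrix (Fin n1 ⊕ Fin n2) (Fin n1 ⊕ Fin n2) ℝ) (hG : IsUnit G)
    (hsym : (H * J * G⁻¹)ᵀ = H * J * G⁻¹)
    (p : ℝ → Fin nh → ℝ) (v1 : ℝ → Fin n1 → ℝ) (v2 : ℝ → Fin n2 → ℝ)
    (p' : ℝ → Fin nh → ℝ) (w' : ℝ → (Fin n1 ⊕ Fin n2) → ℝ)
    (S : ℝ → Fin n1 → ℝ)
    (hS : ∀ t, S t = -(H1⁻¹ *ᵥ (J1⁻¹ *ᵥ (L *ᵥ (Mb *ᵥ (Jb *ᵥ (Lam *ᵥ p t)))))))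
    (hp : ∀ t, HasDerivAt p (p' t) t)
    (hw : ∀ t, HasDerivAt (fun s => Sum.elim (v1 s) (v2 s)) (w' t) t)
    (hode_p : ∀ t, Jh *ᵥ p' t = -(Dh1 *ᵥ (J1 *ᵥ v1 t) + Dh2 *ᵥ (J2 *ᵥ v2 t)))
    (hode_v : ∀ t, w' t = -(G *ᵥ Sum.elim (D1 *ᵥ p t - S t) (D2 *ᵥ p t)))
    (E : ℝ → ℝ)
    (hE : ∀ t, E t = (1/2) * (p t ⬝ᵥ (Hh * Jh) *ᵥ p t)
        + (1/2) * (Sum.elim (v1 t) (v2 t) ⬝ᵥ (H * J * G⁻¹) *ᵥ Sum.elim (v1 t) (v2 t))) :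
    ∀ t, HasDerivAt E 0 t :=
  stmt16_general nh n1 n2 m Hh Jh dHh dJh hHh hJh H1 J1 dH1 dJ1 hH1 hdH1 hJ1 hdJ1 H2 J2 dH2 dJ2 hH2
    hJ2 Mb Jb dMb dJb hMb hJb D1 D2 Dh1 Dh2 L Lam hSBP2 hSBP1 hcompat H J hH hJ G hG hsym p v1 v2 p'
    w' S hS hp hw hode_p hode_v E hE
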